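/- arXiv:2510.10852 — 5 statements merged into one kernel-verified Lean document; each statement's English description precedes it below -/
import Mathlib

section
/- Let p be a prime and let m ≥ 1, r be integers with 0 ≤ r ≤ m(p−1) − 1, and set r̃ = m(p−1) − r − 1. Then the orthogonal complement of RM_p(r,m) with respect to the bilinear form ⟨g,h⟩ = Σ_{v ∈ 𝔽_p^m} g(v)h(v), namely {g : 𝔽_p^m → 𝔽_p | ⟨g,h⟩ = 0 for all h ∈ RM_p(r,m)}, equals RM_p(r̃, m). -/
/-!
Over a finite field `K` with `q` elements, `∑ₓ xᵏ` vanishes for `k < q - 1` and equals `-1` for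
`k = q - 1`. Hence `∑ᵥ f(v)` vanishes whenever `deg f < m(q - 1)` (Chevalley–Warning), so
`RM(r̃)` is orthogonal to `RM(r)` because `r + r̃ < m(q - 1)`. Conversely, represent `g` by its
reduced polynomial `f` (all exponents `≤ q - 1`) and pick a monomial `xᵃ` of `f` of maximal
degree. Every other monomial `xᶜ` of `f` has some `cᵢ < aᵢ` (otherwise `c = a` by maximality),
so its product with the complementary monomial `x^(q-1-a)` has an exponent below `q - 1` and
sums to zero; the pairing of `g` with `x^(q-1-a)` is therefore `± coeff a f ≠ 0`. As
`deg x^(q-1-a) = m(q - 1) - deg f`, orthogonality to `RM(r)` forces `deg f ≤ r̃`.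
-/

/-- The Reed–Muller code `RM_p(r,m)`: the space of functions `𝔽_p^m → 𝔽_p`
that are evaluations of polynomials of total degree at most `r`. -/
def reedMullerCode (p m r : ℕ) : Set ((Fin m → ZMod p) → ZMod p) :=
  {g | ∃ f : MvPolynomial (Fin m) (ZMod p),
    f.totalDegree ≤ r ∧ g = fun v => MvPolynomial.eval v f}

open Finset MvPolynomial

variable {K σ : Type*}

theorem Finsupp.eq_of_le_of_degree_le {a c : σ →₀ ℕ} (hac : a ≤ c) (h : c.degree ≤ a.degree) :
    c = a := by
  obtain ⟨d, rfl⟩ := exists_add_of_le hac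
  have hd : d.degree = 0 := by rw [map_add] at h; omega
  rw [(Finsupp.degree_eq_zero_iff d).mp hd, add_zero]

theorem MvPolynomial.exists_mem_support_degree_eq_totalDegree {R : Type*} [CommSemiring R]
    {f : MvPolynomial σ R} (hf : f ≠ 0) : ∃ a ∈ f.support, a.degree = f.totalDegree :=
  Finset.exists_mem_eq_sup _ (support_nonempty.mpr hf) _ |>.imp fun _ ⟨ha, h⟩ => ⟨ha, h.symm⟩

variable [Field K] [Fintype K] [Fintype σ]

local notation "q" => Fintype.card K

theorem FiniteField.sum_pow_card_sub_one : ∑ x : K, x ^ (q - 1) = -1 := by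
  classical
  have hq : q - 1 ≠ 0 := by have := Fintype.one_lt_card (α := K); omega
  have h (x : K) : x ^ (q - 1) = 1 - if x = 0 then 1 else 0 := by
    split_ifs with hx
    · rw [hx, zero_pow hq, sub_self]
    · rw [FiniteField.pow_card_sub_one_eq_one x hx, sub_zero]
  simp [h, Finset.sum_sub_distrib]

namespace MvPolynomial

theorem exists_mem_restrictDegree_eval_eq (g : (σ → K) → K) :
    ∃ f ∈ restrictDegree σ K (q - 1), g = fun v => eval v f := by
  obtain ⟨f, hf, hfg⟩ := Submodule.mem_map.mp (map_restrict_dom_evalₗ K σ ▸ Submodule.mem_top)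
  exact ⟨f, hf, hfg.symm⟩

variable [DecidableEq σ]

theorem sum_eval_monomial_one (e : σ →₀ ℕ) :
    ∑ v : σ → K, eval v (monomial e 1) = ∏ i, ∑ x : K, x ^ e i := by
  simp only [eval_monomial, one_mul, Finsupp.prod_fintype _ _ (fun _ => pow_zero _)]
  rw [Finset.prod_univ_sum, Fintype.piFinset_univ]

theorem sum_eval_monomial_one_eq_zero {e : σ →₀ ℕ} {i : σ} (hi : e i < q - 1) :
    ∑ v : σ → K, eval v (monomial e 1) = 0 := by
  rw [sum_eval_monomial_one]
  exact Finset.prod_eq_zero (mem_univ i) (FiniteField.sum_pow_lt_card_sub_one K _ hi)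

theorem sum_eval_monomial_one_of_forall_eq {e : σ →₀ ℕ} (he : ∀ i, e i = q - 1) :
    ∑ v : σ → K, eval v (monomial e 1) = (-1) ^ Fintype.card σ := by
  simp [sum_eval_monomial_one, he, FiniteField.sum_pow_card_sub_one]

theorem sum_eval_mul_monomial_one (f : MvPolynomial σ K) (b : σ →₀ ℕ) :
    ∑ v : σ → K, eval v f * eval v (monomial b 1)
      = ∑ c ∈ f.support, coeff c f * ∑ v : σ → K, eval v (monomial (c + b) 1) := by
  have h (v : σ → K) : eval v f * eval v (monomial b 1)
      = ∑ c ∈ f.support, coeff c f * eval v (monomial (c + b) 1) := by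
    conv_lhs => rw [f.as_sum]
    rw [map_sum, Finset.sum_mul]
    refine Finset.sum_congr rfl fun c _ => ?_
    rw [← map_mul, monomial_mul, mul_one, eval_monomial, eval_monomial, one_mul]
  simp only [h, Finset.mul_sum]
  exact Finset.sum_comm

theorem exists_sum_eval_mul_monomial_ne_zero {f : MvPolynomial σ K}
    (hf : f ∈ restrictDegree σ K (q - 1)) (hf0 : f ≠ 0) :
    ∃ b : σ →₀ ℕ, b.degree + f.totalDegree = Fintype.card σ * (q - 1) ∧
      ∑ v : σ → K, eval v f * eval v (monomial b 1) ≠ 0 := by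
  obtain ⟨a, ha, hdeg⟩ := exists_mem_support_degree_eq_totalDegree hf0
  rw [mem_restrictDegree] at hf
  let b : σ →₀ ℕ := Finsupp.equivFunOnFinite.symm fun i => q - 1 - a i
  have hab (i : σ) : b i + a i = q - 1 := by
    have := hf a ha i
    change q - 1 - a i + a i = q - 1
    omega
  refine ⟨b, ?_, ?_⟩
  · rw [← hdeg, ← map_add, Finsupp.degree_eq_sum]
    simp [hab]
  rw [sum_eval_mul_monomial_one, Finset.sum_eq_single a]
  · rw [sum_eval_monomial_one_of_forall_eq fun i => by rw [Finsupp.add_apply, add_comm, hab]]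
    exact mul_ne_zero (mem_support_iff.mp ha) (pow_ne_zero _ (neg_ne_zero.mpr one_ne_zero))
  · intro c hc hca
    obtain ⟨i, hi⟩ : ∃ i, c i < a i := by
      by_contra! hac
      exact hca (Finsupp.eq_of_le_of_degree_le hac (hdeg ▸ le_totalDegree hc))
    rw [sum_eval_monomial_one_eq_zero (i := i) (by rw [Finsupp.add_apply]; have := hab i; omega),
      mul_zero]
  · exact fun h => absurd ha h

end MvPolynomial

/-- For `0 ≤ r ≤ m(p−1) − 1` and `r̃ = m(p−1) − r − 1`, the
orthogonal complement of `RM_p(r,m)` with respect to the bilinear form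
`⟨g,h⟩ = ∑_{v ∈ 𝔽_p^m} g(v)h(v)` equals `RM_p(r̃,m)`. -/
theorem reedMuller_dual (p m r : ℕ) [Fact p.Prime] (hm : 1 ≤ m)
    (hr : r ≤ m * (p - 1) - 1) :
    {g : (Fin m → ZMod p) → ZMod p |
        ∀ h ∈ reedMullerCode p m r, ∑ v : Fin m → ZMod p, g v * h v = 0}
      = reedMullerCode p m (m * (p - 1) - r - 1) := by
  have hq : (Fintype.card (ZMod p) - 1) * Fintype.card (Fin m) = m * (p - 1) := by
    rw [ZMod.card, Fintype.card_fin, mul_comm]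
  have hmp : 0 < m * (p - 1) := Nat.mul_pos hm (by have := (Fact.out : p.Prime).two_le; omega)
  ext g
  constructor
  · intro hg
    obtain ⟨f, hf, rfl⟩ := exists_mem_restrictDegree_eval_eq g
    refine ⟨f, ?_, rfl⟩
    by_contra! hdeg
    have hf0 : f ≠ 0 := by rintro rfl; simp at hdeg
    obtain ⟨b, hb, hne⟩ := exists_sum_eval_mul_monomial_ne_zero hf hf0
    rw [mul_comm, hq] at hb
    refine hne (hg _ ⟨monomial b 1, ?_, rfl⟩)
    rw [totalDegree_monomial _ one_ne_zero]
    exact (show b.degree ≤ r by omega)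
  · rintro ⟨f, hf, rfl⟩ _ ⟨f', hf', rfl⟩
    simp only [← map_mul]
    refine sum_eval_eq_zero _ ((totalDegree_mul f f').trans_lt ?_)
    omega
end

section
/- Let p be a prime, m ≥ 1 an integer, and let f ∈ 𝔽_p[x_1,…,x_m] be a nonzero reduced polynomial of total degree at most r, where 0 ≤ r ≤ m(p−1). Write r = a(p−1) + b with integers a ≥ 0 and 0 ≤ b ≤ p−2. Then p · #{v ∈ 𝔽_p^m : f(v) ≠ 0} ≥ (p − b) · p^{m−a} (the tight Schwartz–Zippel lower bound). -/
open Finset MvPolynomial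

/-- A nonzero reduced polynomial over `ZMod p` has a nonzero value. -/
lemma SZaux.exists_eval_ne (p : ℕ) [Fact p.Prime] (m : ℕ)
    (f : MvPolynomial (Fin m) (ZMod p)) (hf : f ≠ 0)
    (hred : ∀ i, f.degreeOf i ≤ p - 1) :
    ∃ v : Fin m → ZMod p, MvPolynomial.eval v f ≠ 0 := by
  by_contra h
  push_neg at h
  apply hf
  apply MvPolynomial.eq_zero_of_eval_eq_zero (Fin m) (ZMod p) f h
  rw [MvPolynomial.mem_restrictDegree]
  intro s hs i
  have h1 := hred i
  rw [MvPolynomial.degreeOf_le_iff] at h1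
  have := h1 s hs
  rwa [ZMod.card]

/-- Univariate count: a nonzero polynomial of degree `≤ t` has at least `p - t`
nonzero values. -/
lemma SZaux.card_eval_ne (p : ℕ) [Fact p.Prime] (q : Polynomial (ZMod p)) (t : ℕ)
    (hq : q ≠ 0) (hdeg : q.natDegree ≤ t) :
    p - t ≤ (Finset.univ.filter fun x : ZMod p => q.eval x ≠ 0).card := by
  classical
  have h1 : (Finset.univ.filter fun x : ZMod p => q.eval x = 0).card ≤ t := by
    calc (Finset.univ.filter fun x : ZMod p => q.eval x = 0).card
        ≤ q.roots.toFinset.card := by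
          apply Finset.card_le_card
          intro x hx
          rw [Multiset.mem_toFinset, Polynomial.mem_roots hq]
          exact (Finset.mem_filter.mp hx).2
      _ ≤ Multiset.card q.roots := q.roots.toFinset_card_le
      _ ≤ q.natDegree := q.card_roots'
      _ ≤ t := hdeg
  have h2 := Finset.card_filter_add_card_filter_not
    (s := (Finset.univ : Finset (ZMod p))) (p := fun x => q.eval x = 0)
  have h3 : (Finset.univ : Finset (ZMod p)).card = p := by
    rw [Finset.card_univ, ZMod.card]
  have h4 : (Finset.univ.filter fun x : ZMod p => ¬ q.eval x = 0).card
      = (Finset.univ.filter fun x : ZMod p => q.eval x ≠ 0).card := rfl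
  omega

/-- Fibering the nonzero set of `f` over the last `n` coordinates. -/
lemma SZaux.card_fiber (p : ℕ) [Fact p.Prime] (n : ℕ)
    (f : MvPolynomial (Fin (n + 1)) (ZMod p)) :
    ∑ u : Fin n → ZMod p,
        (Finset.univ.filter fun x : ZMod p =>
          MvPolynomial.eval (Fin.cons x u) f ≠ 0).card
      = (Finset.univ.filter
          fun v : Fin (n + 1) → ZMod p => MvPolynomial.eval v f ≠ 0).card := by
  classical
  rw [Finset.card_eq_sum_card_fiberwise
    (f := fun v : Fin (n + 1) → ZMod p => Fin.tail v)
    (t := Finset.univ) (fun x _ => Finset.mem_univ _)]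
  apply Finset.sum_congr rfl
  intro u _
  refine Finset.card_bij' (fun x _ => Fin.cons x u) (fun v _ => v 0) ?_ ?_ ?_ ?_
  · intro x hx
    rw [Finset.mem_filter] at hx
    exact Finset.mem_filter.mpr
      ⟨Finset.mem_filter.mpr ⟨Finset.mem_univ _, hx.2⟩, by simp⟩
  · intro v hv
    rw [Finset.mem_filter, Finset.mem_filter] at hv
    refine Finset.mem_filter.mpr ⟨Finset.mem_univ _, ?_⟩
    have h := Fin.cons_self_tail v
    rw [hv.2] at h
    rw [h]
    exact hv.1.2
  · intro x _
    simp
  · intro v hv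
    rw [Finset.mem_filter] at hv
    have h := Fin.cons_self_tail v
    rw [hv.2] at h
    exact h

/-- Main induction. -/
lemma SZaux.main (p : ℕ) [Fact p.Prime] :
    ∀ (m : ℕ) (f : MvPolynomial (Fin m) (ZMod p)), f ≠ 0 →
      (∀ i, f.degreeOf i ≤ p - 1) → ∀ a b : ℕ, b ≤ p - 2 →
      f.totalDegree ≤ a * (p - 1) + b →
      (p - b) * p ^ (m - a) ≤
        p * (Finset.univ.filter
          fun v : Fin m → ZMod p => MvPolynomial.eval v f ≠ 0).card := by
  classical
  have hp2 : 2 ≤ p := (Fact.out : p.Prime).two_le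
  -- the trivial bound from nonemptiness
  have triv : ∀ (m : ℕ) (f : MvPolynomial (Fin m) (ZMod p)), f ≠ 0 →
      (∀ i, f.degreeOf i ≤ p - 1) → ∀ b : ℕ,
      p - b ≤ p * (Finset.univ.filter
          fun v : Fin m → ZMod p => MvPolynomial.eval v f ≠ 0).card := by
    intro m f hf hred b
    obtain ⟨v, hv⟩ := SZaux.exists_eval_ne p m f hf hred
    have : 0 < (Finset.univ.filter
        fun v : Fin m → ZMod p => MvPolynomial.eval v f ≠ 0).card :=
      Finset.card_pos.mpr ⟨v, Finset.mem_filter.mpr ⟨Finset.mem_univ _, hv⟩⟩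
    calc p - b ≤ p * 1 := by omega
      _ ≤ _ := Nat.mul_le_mul_left p this
  intro m
  induction m with
  | zero =>
      intro f hf hred a b hb hdeg
      simpa using triv 0 f hf hred b
  | succ n ih =>
      intro f hf hred a b hb hdeg
      rcases le_or_gt (n + 1) a with ha | ha
      · rw [Nat.sub_eq_zero_of_le ha, pow_zero, mul_one]
        exact triv (n + 1) f hf hred b
      -- now `a ≤ n`
      have han : a ≤ n := by omega
      set F := finSuccEquiv (ZMod p) n f with hF_def
      have hF : F ≠ 0 := by
        intro h
        apply hf
        have := congrArg (finSuccEquiv (ZMod p) n).symm h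
        simpa [hF_def] using this
      set t := F.natDegree with ht_def
      have ht : t ≤ p - 1 := by
        rw [ht_def, MvPolynomial.natDegree_finSuccEquiv]
        exact hred 0
      have htr : t ≤ a * (p - 1) + b := by
        rw [ht_def, MvPolynomial.natDegree_finSuccEquiv]
        exact le_trans (MvPolynomial.degreeOf_le_totalDegree f 0) hdeg
      set g := F.coeff t with hg_def
      have hg0 : g ≠ 0 := by
        rw [hg_def, ht_def]
        exact Polynomial.leadingCoeff_ne_zero.mpr hF
      have hgred : ∀ j, g.degreeOf j ≤ p - 1 := fun j =>
        le_trans (MvPolynomial.degreeOf_coeff_finSuccEquiv f j t) (hred j.succ)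
      have hgt : g.totalDegree + t ≤ a * (p - 1) + b :=
        le_trans (MvPolynomial.totalDegree_coeff_finSuccEquiv_add_le f t hg0) hdeg
      -- the set of points where the leading coefficient is nonzero
      set S := (Finset.univ.filter
        fun u : Fin n → ZMod p => MvPolynomial.eval u g ≠ 0) with hS_def
      -- counting: `N ≥ (p - t) * S.card`
      have hcount : S.card * (p - t) ≤ (Finset.univ.filter
          fun v : Fin (n + 1) → ZMod p => MvPolynomial.eval v f ≠ 0).card := by
        calc S.card * (p - t) = ∑ _u ∈ S, (p - t) := by
              rw [Finset.sum_const, smul_eq_mul]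
          _ ≤ ∑ u ∈ S, (Finset.univ.filter fun x : ZMod p =>
                MvPolynomial.eval (Fin.cons x u) f ≠ 0).card := by
              apply Finset.sum_le_sum
              intro u hu
              have hu' : MvPolynomial.eval u g ≠ 0 :=
                (Finset.mem_filter.mp hu).2
              set q := F.map (MvPolynomial.eval u) with hq_def
              have hqc : q.coeff t = MvPolynomial.eval u g := by
                rw [hq_def, Polynomial.coeff_map, hg_def]
              have hq0 : q ≠ 0 := by
                intro h
                rw [h, Polynomial.coeff_zero] at hqc
                exact hu' hqc.symm
              have hqd : q.natDegree ≤ t := by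
                rw [hq_def, ht_def]
                exact Polynomial.natDegree_map_le
              have := SZaux.card_eval_ne p q t hq0 hqd
              have heq : (Finset.univ.filter fun x : ZMod p =>
                  MvPolynomial.eval (Fin.cons x u) f ≠ 0)
                  = (Finset.univ.filter fun x : ZMod p => q.eval x ≠ 0) := by
                apply Finset.filter_congr
                intro x _
                rw [MvPolynomial.eval_eq_eval_mv_eval', hq_def, hF_def]
              rw [heq]
              exact this
          _ ≤ ∑ u : Fin n → ZMod p, (Finset.univ.filter fun x : ZMod p =>
                MvPolynomial.eval (Fin.cons x u) f ≠ 0).card :=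
              Finset.sum_le_sum_of_subset (Finset.filter_subset _ _)
          _ = _ := SZaux.card_fiber p n f
      have hbp : b ≤ p := by omega
      have htp : t ≤ p := by omega
      rcases le_or_gt t b with htb | htb
      · -- case t ≤ b : apply IH with (a, b - t)
        have hg_deg : g.totalDegree ≤ a * (p - 1) + (b - t) := by omega
        have hIH := ih g hg0 hgred a (b - t) (by omega) hg_deg
        -- key numeric inequality: (p - b) * p ≤ (p - t) * (p - (b - t))
        have key : (p - b) * p ≤ (p - t) * (p - (b - t)) := by
          have h1 : p - (b - t) = (p - b) + t := by omega
          have hp' : (p - t) + t = p := by omega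
          calc (p - b) * p = (p - b) * (p - t) + (p - b) * t := by
                rw [← Nat.mul_add, hp']
            _ ≤ (p - t) * (p - b) + (p - t) * t := by
                rw [Nat.mul_comm (p - b) (p - t)]
                exact Nat.add_le_add_left (Nat.mul_le_mul_right t (by omega)) _
            _ = (p - t) * ((p - b) + t) := by rw [Nat.mul_add]
            _ = (p - t) * (p - (b - t)) := by rw [h1]
        have hpow : p ^ (n + 1 - a) = p ^ (n - a) * p := by
          rw [← pow_succ]
          congr 1
          omega
        calc (p - b) * p ^ (n + 1 - a)
            = (p - b) * p * p ^ (n - a) := by rw [hpow]; ring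
          _ ≤ (p - t) * (p - (b - t)) * p ^ (n - a) :=
              Nat.mul_le_mul_right _ key
          _ = (p - t) * ((p - (b - t)) * p ^ (n - a)) := by ring
          _ ≤ (p - t) * (p * S.card) := Nat.mul_le_mul_left _ hIH
          _ = p * (S.card * (p - t)) := by ring
          _ ≤ _ := Nat.mul_le_mul_left _ hcount
      · -- case b < t : apply IH with (a - 1, p - 1 + b - t)
        have ha1 : 1 ≤ a := by
          by_contra h
          have : a = 0 := by omega
          rw [this] at htr
          omega
        set b' := p - 1 + b - t with hb'_def
        have hb' : b' ≤ p - 2 := by omega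
        have hK : (a - 1) * (p - 1) + (p - 1) = a * (p - 1) := by
          rw [← Nat.succ_pred_eq_of_pos ha1, Nat.succ_mul, Nat.succ_sub_one]
        have hb'eq : b' + t = p - 1 + b := by omega
        have hg_deg : g.totalDegree ≤ (a - 1) * (p - 1) + b' := by
          have h6 : g.totalDegree + t ≤ (a - 1) * (p - 1) + b' + t := by
            calc g.totalDegree + t ≤ a * (p - 1) + b := hgt
              _ = (a - 1) * (p - 1) + (p - 1) + b := by rw [hK]
              _ = (a - 1) * (p - 1) + (b' + t) := by omega
              _ = (a - 1) * (p - 1) + b' + t := by ring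
          omega
        have hIH := ih g hg0 hgred (a - 1) b' hb' hg_deg
        have hpow : n - (a - 1) = n + 1 - a := by omega
        rw [hpow] at hIH
        -- key numeric inequality: p - b ≤ (p - t) * (p - b')
        have key : p - b ≤ (p - t) * (p - b') := by
          have e1 : p - b' = (t - b) + 1 := by omega
          rw [e1, Nat.mul_succ]
          have h5 : t - b ≤ (p - t) * (t - b) :=
            Nat.le_mul_of_pos_left _ (by omega)
          calc p - b ≤ (t - b) + (p - t) := by omega
            _ ≤ (p - t) * (t - b) + (p - t) := Nat.add_le_add_right h5 _
        calc (p - b) * p ^ (n + 1 - a)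
            ≤ (p - t) * (p - b') * p ^ (n + 1 - a) :=
              Nat.mul_le_mul_right _ key
          _ = (p - t) * ((p - b') * p ^ (n + 1 - a)) := by ring
          _ ≤ (p - t) * (p * S.card) := Nat.mul_le_mul_left _ hIH
          _ = p * (S.card * (p - t)) := by ring
          _ ≤ _ := Nat.mul_le_mul_left _ hcount

/-- **tight Schwartz–Zippel lower bound.** Let `f` be a nonzero
reduced polynomial (individual degrees at most `p−1`) of total degree at most
`r ≤ m(p−1)`, and write `r = a(p−1) + b` with `0 ≤ b ≤ p−2`.  Then
`p · #{v : f(v) ≠ 0} ≥ (p − b) · p^{m−a}`. -/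
theorem schwartz_zippel_tight_lower_bound (p m r a b : ℕ) [Fact p.Prime]
    (hm : 1 ≤ m) (hr : r ≤ m * (p - 1))
    (hab : r = a * (p - 1) + b) (hb : b ≤ p - 2)
    (f : MvPolynomial (Fin m) (ZMod p)) (hf : f ≠ 0)
    (hred : ∀ i, f.degreeOf i ≤ p - 1) (hdeg : f.totalDegree ≤ r) :
    (p - b) * p ^ (m - a) ≤
      p * (Finset.univ.filter
        fun v : Fin m → ZMod p => MvPolynomial.eval v f ≠ 0).card := by
  exact SZaux.main p m f hf hred a b hb (hab ▸ hdeg)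
end

section
/- Let p be a prime and let m ≥ 1, r be integers with 0 ≤ r ≤ m(p−1). Write r = a(p−1) + b with integers a ≥ 0 and 0 ≤ b ≤ p−2. Then there exists a nonzero reduced polynomial f ∈ 𝔽_p[x_1,…,x_m] of total degree exactly r such that p · #{v ∈ 𝔽_p^m : f(v) ≠ 0} = (p − b) · p^{m−a}. Consequently the minimum number of nonzero values of a nonzero reduced polynomial of total degree at most r is exactly d_RM(r,m) = (p−b)·p^{m−a−1}. -/
/-!
Write `q = |K|` and `N(f)` for the number of points where `f` does not vanish.

The lower bound is proved by induction on the number of variables. Expand `f` in `x₀`, with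
leading coefficient `g` and `t = deg_{x₀} f ≤ q - 1`; then `deg g ≤ deg f - t`, and wherever `g`
does not vanish, `f` restricted to that line is a univariate polynomial of degree `t`, with at
most `t` roots. Hence `N(f) ≥ (q - t) N(g)`, and an inequality between the bounds for
`(deg f, m + 1)` and `(deg f - t, m)` closes the induction.

The bound is attained by `∏ᵢ ∏_{c ∈ Tᵢ} (xᵢ - c)` with `|Tᵢ| = q - 1` for `i < a`, `|Tₐ| = b`
and `Tᵢ = ∅` for `i > a`: it is nonzero exactly on the box `∏ᵢ Tᵢᶜ`, of size
`(q - b) q^(m - a - 1)`.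
-/

open MvPolynomial Finset

/-- `q` times the Reed–Muller distance for total degree `a (q - 1) + b` in `m` variables. -/
def rmBound (q m a b : ℕ) : ℕ :=
  (q - b) * q ^ (m - a)

theorem exists_rmBound_le_mul_rmBound {q t a b : ℕ} (m : ℕ) (hq : 0 < q) (ht : t ≤ q - 1)
    (hb : b ≤ q - 2) (htr : t ≤ a * (q - 1) + b) :
    ∃ a' b', b' ≤ q - 2 ∧ a * (q - 1) + b - t = a' * (q - 1) + b' ∧
      rmBound q (m + 1) a b ≤ (q - t) * rmBound q m a' b' := by
  unfold rmBound
  rcases le_or_gt t b with htb | hbt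
  · refine ⟨a, b - t, by omega, by omega, ?_⟩
    have hmul : (q - b) * q ≤ (q - t) * (q - (b - t)) := by
      zify [htb, (by omega : b ≤ q), (by omega : t ≤ q), (by omega : b - t ≤ q)]
      nlinarith
    calc (q - b) * q ^ (m + 1 - a) ≤ (q - b) * q ^ (m - a + 1) := by gcongr; omega
      _ = (q - b) * q * q ^ (m - a) := by ring
      _ ≤ (q - t) * (q - (b - t)) * q ^ (m - a) := by gcongr
      _ = (q - t) * ((q - (b - t)) * q ^ (m - a)) := by ring
  · obtain ⟨a, rfl⟩ : ∃ a', a = a' + 1 :=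
      Nat.exists_eq_add_one.mpr (Nat.pos_of_ne_zero fun ha => by simp [ha] at htr; omega)
    refine ⟨a, q - 1 + b - t, by omega, by rw [add_one_mul]; omega, ?_⟩
    rw [show m + 1 - (a + 1) = m - a by omega, ← mul_assoc]
    gcongr
    zify [(by omega : b ≤ q), (by omega : t ≤ q), (by omega : 1 ≤ q),
      (by omega : t ≤ q - 1 + b), (by omega : q - 1 + b - t ≤ q)]
    have hqt : (0 : ℤ) ≤ q - t - 1 := by omega
    have htb : (0 : ℤ) ≤ t - b := by omega
    nlinarith [mul_nonneg hqt htb]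

theorem Polynomial.card_sub_natDegree_le_card_eval_ne_zero {R : Type*} [CommRing R]
    [IsDomain R] [Fintype R] [DecidableEq R] {g : Polynomial R} (hg : g ≠ 0) :
    Fintype.card R - g.natDegree ≤ #{y | g.eval y ≠ 0} := by
  have hroots : #{y | g.eval y = 0} ≤ g.natDegree :=
    Polynomial.card_le_degree_of_subset_roots fun y hy => by
      simp_all [Polynomial.mem_roots hg]
  have hsplit := card_filter_add_card_filter_not (s := univ) fun y => g.eval y = 0
  rw [card_univ] at hsplit
  change _ + #{y | g.eval y ≠ 0} = _ at hsplit
  omega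

theorem card_filter_eq_sum_card_filter_cons {α : Type*} [Fintype α] {m : ℕ}
    (P : (Fin (m + 1) → α) → Prop) [DecidablePred P] :
    #{v | P v} = ∑ x : Fin m → α, #{y | P (Fin.cons y x)} := by
  simp only [card_filter]
  rw [← (Fin.consEquiv fun _ => α).sum_comp, Fintype.sum_prod_type_right]
  rfl

namespace MvPolynomial

noncomputable def nonzeroCount {σ R : Type*} [Fintype σ] [DecidableEq σ] [CommSemiring R]
    [Fintype R] [DecidableEq R] (f : MvPolynomial σ R) : ℕ :=
  #{v : σ → R | eval v f ≠ 0}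

section LowerBound

variable {K : Type*} [Field K] [Fintype K] [DecidableEq K]

theorem card_sub_degreeOf_mul_nonzeroCount_leadingCoeff_le {m : ℕ}
    (f : MvPolynomial (Fin (m + 1)) K) :
    (Fintype.card K - f.degreeOf 0) * (finSuccEquiv K m f).leadingCoeff.nonzeroCount ≤
      f.nonzeroCount := by
  let F := finSuccEquiv K m f
  have fibre (x : Fin m → K) (hx : eval x F.leadingCoeff ≠ 0) :
      Fintype.card K - f.degreeOf 0 ≤ #{y | eval (Fin.cons y x) f ≠ 0} := by
    have hdeg : (F.map (eval x)).natDegree = f.degreeOf 0 := by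
      rw [Polynomial.natDegree_map_of_leadingCoeff_ne_zero _ hx, natDegree_finSuccEquiv]
    have hne : F.map (eval x) ≠ 0 := Polynomial.leadingCoeff_ne_zero.mp
      (by rwa [Polynomial.leadingCoeff_map_of_leadingCoeff_ne_zero _ hx])
    simpa only [hdeg, eval_eq_eval_mv_eval'] using
      Polynomial.card_sub_natDegree_le_card_eval_ne_zero hne
  calc (Fintype.card K - f.degreeOf 0) * F.leadingCoeff.nonzeroCount
      = ∑ _x ∈ {x | eval x F.leadingCoeff ≠ 0}, (Fintype.card K - f.degreeOf 0) := by
        rw [sum_const, smul_eq_mul, mul_comm, nonzeroCount]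
    _ ≤ ∑ x ∈ {x | eval x F.leadingCoeff ≠ 0}, #{y | eval (Fin.cons y x) f ≠ 0} :=
        sum_le_sum fun x hx => fibre x (mem_filter.1 hx).2
    _ ≤ ∑ x, #{y | eval (Fin.cons y x) f ≠ 0} := sum_le_sum_of_subset (filter_subset _ _)
    _ = f.nonzeroCount := (card_filter_eq_sum_card_filter_cons fun v => eval v f ≠ 0).symm

theorem rmBound_le_mul_nonzeroCount : ∀ {m : ℕ} {f : MvPolynomial (Fin m) K}, f ≠ 0 →
    (∀ i, f.degreeOf i ≤ Fintype.card K - 1) → ∀ {a b : ℕ}, b ≤ Fintype.card K - 2 →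
    f.totalDegree ≤ a * (Fintype.card K - 1) + b →
    rmBound (Fintype.card K) m a b ≤ Fintype.card K * f.nonzeroCount
  | 0, f, hf, _, a, b, _, _ => by
    have hpos : 0 < f.nonzeroCount := card_pos.mpr ⟨isEmptyElim, mem_filter.2 ⟨mem_univ _, by
      rw [f.eq_C_of_isEmpty] at hf ⊢
      simpa using hf⟩⟩
    rw [rmBound, Nat.zero_sub, pow_zero, mul_one]
    exact (Nat.sub_le _ _).trans (Nat.le_mul_of_pos_right _ hpos)
  | m + 1, f, hf, hred, a, b, hb, hdeg => by
    set g := (finSuccEquiv K m f).leadingCoeff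
    have hg : g ≠ 0 := by simpa [g] using hf
    have hg_red (i : Fin m) : g.degreeOf i ≤ Fintype.card K - 1 :=
      (degreeOf_coeff_finSuccEquiv f i _).trans (hred i.succ)
    have hg_deg : g.totalDegree + f.degreeOf 0 ≤ f.totalDegree := by
      rw [← natDegree_finSuccEquiv]
      exact totalDegree_coeff_finSuccEquiv_add_le f _ hg
    obtain ⟨a', b', hb', hab', hstep⟩ :=
      exists_rmBound_le_mul_rmBound (a := a) m Fintype.card_pos (hred 0) hb (by omega)
    calc rmBound (Fintype.card K) (m + 1) a b
        ≤ (Fintype.card K - f.degreeOf 0) * rmBound (Fintype.card K) m a' b' := hstep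
      _ ≤ (Fintype.card K - f.degreeOf 0) * (Fintype.card K * g.nonzeroCount) :=
          Nat.mul_le_mul_left _ (rmBound_le_mul_nonzeroCount hg hg_red hb' (by omega))
      _ = Fintype.card K * ((Fintype.card K - f.degreeOf 0) * g.nonzeroCount) := by ring
      _ ≤ Fintype.card K * f.nonzeroCount :=
          Nat.mul_le_mul_left _ (card_sub_degreeOf_mul_nonzeroCount_leadingCoeff_le f)

end LowerBound

theorem totalDegree_prod_of_isDomain {σ R ι : Type*} [CommRing R] [IsDomain R]
    (s : Finset ι) (F : ι → MvPolynomial σ R) (h : ∀ i ∈ s, F i ≠ 0) :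
    (∏ i ∈ s, F i).totalDegree = ∑ i ∈ s, (F i).totalDegree := by
  classical
  induction s using Finset.induction_on with
  | empty => simp
  | insert j s hj ih =>
    rw [prod_insert hj, sum_insert hj, totalDegree_mul_of_isDomain (h j (mem_insert_self j s))
      (prod_ne_zero_iff.2 fun i hi => h i (mem_insert_of_mem hi)),
      ih fun i hi => h i (mem_insert_of_mem hi)]

section XSubC

variable {σ R : Type*} [CommRing R] [Nontrivial R]

theorem totalDegree_X_sub_C (i : σ) (c : R) : (X i - C c : MvPolynomial σ R).totalDegree = 1 := by
  rw [sub_eq_add_neg, ← C_neg, totalDegree_add_eq_left_of_totalDegree_lt] <;>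
    simp [totalDegree_X, totalDegree_C]

theorem X_sub_C_ne_zero (i : σ) (c : R) : (X i - C c : MvPolynomial σ R) ≠ 0 := fun h => by
  simpa [h] using totalDegree_X_sub_C i c

theorem degreeOf_X_sub_C_le [DecidableEq σ] (i j : σ) (c : R) :
    (X i - C c : MvPolynomial σ R).degreeOf j ≤ if j = i then 1 else 0 :=
  (degreeOf_sub_le j _ _).trans (by rw [degreeOf_X, degreeOf_C]; simp)

end XSubC

section ProdXSubC

variable {σ R : Type*} [Fintype σ] [CommRing R]

noncomputable def prodXSubC (T : σ → Finset R) : MvPolynomial σ R :=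
  ∏ i, ∏ c ∈ T i, (X i - C c)

theorem degreeOf_prodXSubC_le [Nontrivial R] [DecidableEq σ] (T : σ → Finset R) (j : σ) :
    (prodXSubC T).degreeOf j ≤ #(T j) :=
  calc (prodXSubC T).degreeOf j ≤ ∑ i, ∑ c ∈ T i, (X i - C c : MvPolynomial σ R).degreeOf j :=
        (degreeOf_prod_le _ _ _).trans (sum_le_sum fun i _ => degreeOf_prod_le _ _ _)
    _ ≤ ∑ i, ∑ _c ∈ T i, if j = i then 1 else 0 :=
        sum_le_sum fun i _ => sum_le_sum fun c _ => degreeOf_X_sub_C_le i j c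
    _ = #(T j) := by simp

variable [IsDomain R]

theorem prodXSubC_ne_zero (T : σ → Finset R) : prodXSubC T ≠ 0 :=
  prod_ne_zero_iff.2 fun i _ => prod_ne_zero_iff.2 fun c _ => X_sub_C_ne_zero i c

theorem totalDegree_prodXSubC (T : σ → Finset R) :
    (prodXSubC T).totalDegree = ∑ i, #(T i) := by
  rw [prodXSubC, totalDegree_prod_of_isDomain _ _ fun i _ =>
    prod_ne_zero_iff.2 fun c _ => X_sub_C_ne_zero i c]
  refine sum_congr rfl fun i _ => ?_
  rw [totalDegree_prod_of_isDomain _ _ fun c _ => X_sub_C_ne_zero i c]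
  simp [totalDegree_X_sub_C]

theorem eval_prodXSubC_ne_zero_iff (T : σ → Finset R) (v : σ → R) :
    eval v (prodXSubC T) ≠ 0 ↔ ∀ i, v i ∉ T i := by
  simp [prodXSubC, prod_ne_zero_iff, sub_eq_zero]

theorem nonzeroCount_prodXSubC [DecidableEq σ] [Fintype R] [DecidableEq R] (T : σ → Finset R) :
    (prodXSubC T).nonzeroCount = ∏ i, (Fintype.card R - #(T i)) := by
  have hbox : ({v | eval v (prodXSubC T) ≠ 0} : Finset (σ → R)) =
      Fintype.piFinset fun i => (T i)ᶜ := by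
    ext v
    simp [eval_prodXSubC_ne_zero_iff]
  rw [nonzeroCount, hbox, Fintype.card_piFinset]
  simp [card_compl]

end ProdXSubC

end MvPolynomial

def rmDegrees (q a b i : ℕ) : ℕ :=
  if i < a then q - 1 else if i = a then b else 0

theorem rmDegrees_of_lt {q a b i : ℕ} (h : i < a) : rmDegrees q a b i = q - 1 := if_pos h

theorem rmDegrees_self (q a b : ℕ) : rmDegrees q a b a = b := by simp [rmDegrees]

theorem rmDegrees_of_gt {q a b i : ℕ} (h : a < i) : rmDegrees q a b i = 0 := by
  simp [rmDegrees, h.not_gt, h.ne']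

theorem sum_range_rmDegrees {q a b m : ℕ} (ham : a ≤ m) (hbm : a < m ∨ b = 0) :
    ∑ i ∈ range m, rmDegrees q a b i = a * (q - 1) + b := by
  have hlow : ∑ i ∈ range a, rmDegrees q a b i = a * (q - 1) := by
    rw [sum_congr rfl fun i hi => rmDegrees_of_lt (mem_range.1 hi)]
    simp
  have hhigh : ∑ i ∈ Ico a m, rmDegrees q a b i = b := by
    obtain rfl | ham := ham.eq_or_lt
    · simp [hbm.resolve_left (lt_irrefl a)]
    · rw [sum_eq_single_of_mem a (by simp [ham]) fun i hi hia =>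
        rmDegrees_of_gt (lt_of_le_of_ne (mem_Ico.1 hi).1 (Ne.symm hia)), rmDegrees_self]
  rw [← sum_range_add_sum_Ico _ ham, hlow, hhigh]

theorem mul_prod_range_sub_rmDegrees {q a b m : ℕ} (hq : 0 < q) (ham : a ≤ m)
    (hbm : a < m ∨ b = 0) :
    q * ∏ i ∈ range m, (q - rmDegrees q a b i) = rmBound q m a b := by
  have hlow : ∏ i ∈ range a, (q - rmDegrees q a b i) = 1 :=
    prod_eq_one fun i hi => by rw [rmDegrees_of_lt (mem_range.1 hi)]; omega
  have hhigh (k : ℕ) (hk : a < k) :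
      ∏ i ∈ Ico k m, (q - rmDegrees q a b i) = q ^ (m - k) := by
    rw [prod_congr rfl fun i hi => by rw [rmDegrees_of_gt (hk.trans_le (mem_Ico.1 hi).1)],
      prod_const, Nat.card_Ico, Nat.sub_zero]
  rw [rmBound, ← prod_range_mul_prod_Ico _ ham, hlow, one_mul]
  obtain rfl | ham := ham.eq_or_lt
  · simp [hbm.resolve_left (lt_irrefl a)]
  · rw [prod_eq_prod_Ico_succ_bot ham, rmDegrees_self, hhigh _ a.lt_succ_self,
      show m - a = m - (a + 1) + 1 by omega, pow_succ]
    ring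

namespace MvPolynomial

variable {K : Type*} [Field K] [Fintype K] [DecidableEq K]

theorem exists_mul_nonzeroCount_eq_rmBound {m a b : ℕ} (hb : b ≤ Fintype.card K - 2)
    (hr : a * (Fintype.card K - 1) + b ≤ m * (Fintype.card K - 1)) :
    ∃ f : MvPolynomial (Fin m) K, f ≠ 0 ∧ (∀ i, f.degreeOf i ≤ Fintype.card K - 1) ∧
      f.totalDegree = a * (Fintype.card K - 1) + b ∧
      Fintype.card K * f.nonzeroCount = rmBound (Fintype.card K) m a b := by
  set q := Fintype.card K
  have hq : 1 < q := Fintype.one_lt_card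
  have ham : a ≤ m :=
    Nat.le_of_mul_le_mul_right (by omega : a * (q - 1) ≤ m * (q - 1)) (by omega)
  have hbm : a < m ∨ b = 0 := ham.lt_or_eq.imp_right fun h => by subst h; omega
  have hdeg (i : ℕ) : rmDegrees q a b i ≤ q - 1 := by unfold rmDegrees; split_ifs <;> omega
  have hsets (i : Fin m) : ∃ T : Finset K, #T = rmDegrees q a b i := by
    obtain ⟨T, -, hT⟩ :=
      exists_subset_card_eq (s := (univ : Finset K)) ((hdeg i).trans (by rw [card_univ]; omega))
    exact ⟨T, hT⟩
  choose T hT using hsets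
  refine ⟨prodXSubC T, prodXSubC_ne_zero T,
    fun i => (degreeOf_prodXSubC_le T i).trans (hT i ▸ hdeg i), ?_, ?_⟩
  · rw [totalDegree_prodXSubC, ← sum_range_rmDegrees ham hbm, ← Fin.sum_univ_eq_sum_range]
    simp only [hT]
  · rw [nonzeroCount_prodXSubC, ← mul_prod_range_sub_rmDegrees (by omega) ham hbm,
      ← Fin.prod_univ_eq_prod_range]
    simp only [hT]
    rfl

end MvPolynomial

theorem schwartz_zippel_tight_general (p m r a b : ℕ) [Fact p.Prime]
    (hr : r ≤ m * (p - 1))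
    (hab : r = a * (p - 1) + b) (hb : b ≤ p - 2) :
    (∃ f : MvPolynomial (Fin m) (ZMod p), f ≠ 0 ∧ (∀ i, f.degreeOf i ≤ p - 1) ∧
      f.totalDegree = r ∧
      p * (Finset.univ.filter
          fun v : Fin m → ZMod p => MvPolynomial.eval v f ≠ 0).card
        = (p - b) * p ^ (m - a)) ∧
    ∃ d : ℕ, p * d = (p - b) * p ^ (m - a) ∧
      IsLeast {n : ℕ | ∃ f : MvPolynomial (Fin m) (ZMod p), f ≠ 0 ∧
        (∀ i, f.degreeOf i ≤ p - 1) ∧ f.totalDegree ≤ r ∧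
        n = (Finset.univ.filter
          fun v : Fin m → ZMod p => MvPolynomial.eval v f ≠ 0).card} d := by
  have hcard : Fintype.card (ZMod p) = p := ZMod.card p
  obtain ⟨f, hf, hf_red, hf_deg, hf_count⟩ :=
    exists_mul_nonzeroCount_eq_rmBound (K := ZMod p) (m := m) (a := a) (b := b)
      (by rwa [hcard]) (by rwa [hcard, ← hab])
  rw [hcard] at hf_red hf_deg hf_count
  rw [← hab] at hf_deg
  refine ⟨⟨f, hf, hf_red, hf_deg, hf_count⟩, f.nonzeroCount, hf_count,
    ⟨f, hf, hf_red, hf_deg.le, rfl⟩, ?_⟩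
  rintro _ ⟨g, hg, hg_red, hg_deg, rfl⟩
  have hbound := rmBound_le_mul_nonzeroCount (a := a) (b := b) hg (by rwa [hcard])
    (by rwa [hcard]) (by rwa [hcard, ← hab])
  rw [hcard, ← hf_count] at hbound
  exact Nat.le_of_mul_le_mul_left hbound (Fact.out : p.Prime).pos

/-- For `0 ≤ r ≤ m(p−1)`, writing `r = a(p−1)+b` with
`0 ≤ b ≤ p−2`, there exists a nonzero reduced polynomial `f` of total degree
exactly `r` with `p · #{v : f(v) ≠ 0} = (p−b)·p^{m−a}`.  Consequently the
minimum number of nonzero values of a nonzero reduced polynomial of total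
degree at most `r` is exactly `d_RM(r,m)`, the natural number `d` satisfying
`p · d = (p−b)·p^{m−a}`. -/
theorem schwartz_zippel_tight (p m r a b : ℕ) [Fact p.Prime]
    (hm : 1 ≤ m) (hr : r ≤ m * (p - 1))
    (hab : r = a * (p - 1) + b) (hb : b ≤ p - 2) :
    (∃ f : MvPolynomial (Fin m) (ZMod p), f ≠ 0 ∧ (∀ i, f.degreeOf i ≤ p - 1) ∧
      f.totalDegree = r ∧
      p * (Finset.univ.filter
          fun v : Fin m → ZMod p => MvPolynomial.eval v f ≠ 0).card
        = (p - b) * p ^ (m - a)) ∧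
    ∃ d : ℕ, p * d = (p - b) * p ^ (m - a) ∧
      IsLeast {n : ℕ | ∃ f : MvPolynomial (Fin m) (ZMod p), f ≠ 0 ∧
        (∀ i, f.degreeOf i ≤ p - 1) ∧ f.totalDegree ≤ r ∧
        n = (Finset.univ.filter
          fun v : Fin m → ZMod p => MvPolynomial.eval v f ≠ 0).card} d :=
  schwartz_zippel_tight_general p m r a b hr hab hb
end

section
/- Let p be a prime, m ≥ 1 an integer, 0 ≤ r ≤ m(p−1), and w an integer, and suppose Δ_p(m, r, w) > 0. Then the minimum of #{v ∈ 𝔽_p^m : |v|_M > w and f(v) ≠ 0} over all nonzero reduced polynomials f ∈ 𝔽_p[x_1,…,x_m] of total degree at most r equals Δ_p(m, r, w). (That is, the distance of the punctured Reed–Muller code PRM_p(r, m, w), punctured at all points of Manhattan weight at most w, is Δ_p(m, r, w).) -/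
/-- The `p`-nomial coefficient `C(m,s)_p`: the coefficient of `x^s` in
`(1 + x + ⋯ + x^{p−1})^m ∈ ℤ[x]`, extended by `0` for `s < 0`. -/
noncomputable def pnomial (p m : ℕ) (s : ℤ) : ℤ :=
  if 0 ≤ s then
    ((∑ i ∈ Finset.range p, (Polynomial.X : Polynomial ℤ) ^ i) ^ m).coeff s.toNat
  else 0

/-- `C(m,>s)_p = ∑_{i>s} C(m,i)_p`.  Since `C(m,i)_p = 0` for `i > m(p−1)`,
the sum may be truncated at `m(p−1)`. -/
noncomputable def pnomialGT (p m : ℕ) (s : ℤ) : ℤ :=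
  ∑ i ∈ Finset.range (m * (p - 1) + 1), if s < (i : ℤ) then pnomial p m i else 0

/-- `Δ_p(m,r,w)`: writing `r = α(p−1)+β` with `0 ≤ β ≤ p−2` (so `α = r/(p−1)`,
`β = r % (p−1)`), this is `C(m−α,>w)_p` if `β = 0`, and
`C(m−α,>w)_p − ∑_{j=p−β}^{p−1} C(m−α−1,>w−j)_p` otherwise. -/
noncomputable def Δp (p m r : ℕ) (w : ℤ) : ℤ :=
  if r % (p - 1) = 0 then pnomialGT p (m - r / (p - 1)) w
  else pnomialGT p (m - r / (p - 1)) w -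
    ∑ j ∈ Finset.Icc (p - r % (p - 1)) (p - 1),
      pnomialGT p (m - r / (p - 1) - 1) (w - (j : ℤ))

/-- The Manhattan weight `|v|_M = ∑ i, val(v_i)` of a vector `v ∈ 𝔽_p^m`. -/
def manhattanWeight {p m : ℕ} (v : Fin m → ZMod p) : ℕ := ∑ i, (v i).val

/-!
Write `r = α(p-1) + β`. The polynomial `∏ᵢ ∏_{val c > (i+1)(p-1) - r} (xᵢ - c)` is reduced, has
degree `r` and is nonzero exactly on the staircase box `{0}^α × [0, p-1-β] × 𝔽_p^{m-α-1}`;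
counting the heavy points (Manhattan weight `> w`) of that box with the generating function
`(1 + x + ⋯ + x^{p-1})^m` gives `Δ_p(m,r,w)`.

Conversely, view a nonzero reduced `f` of degree `≤ r` as a polynomial in `x₀` of degree `t`
whose leading coefficient `g` has degree `≤ r - t`. Over every `u` with `g(u) ≠ 0`, `f(·, u)` has
at most `t` roots, so `#{v : |v|_M > w, f(v) ≠ 0} ≥ ∑_{n < p-t} #{u : |u|_M > w - n, g(u) ≠ 0}`,
and by induction on `m` each summand is at least a staircase count. Finally the
staircase box for `(m+1, r)` has at most as many heavy points as `[0, p-1-t] ×` the box for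
`(m, r-t)`: inside a rectangle `[0,a) × [0,b)` with `a + b` fixed, the number of ways to write
`s = x + y` only grows, for every `s`, as the rectangle becomes more balanced.
-/

namespace PuncturedReedMuller

open Finset MvPolynomial

lemma card_range_filter_lt (N : ℕ) (s : ℤ) :
    #((range N).filter fun n : ℕ => s < n) = N - (s + 1).toNat := by
  have : (range N).filter (fun n : ℕ => s < n) = Ico (s + 1).toNat N := by
    ext n
    simp only [mem_filter, mem_range, mem_Ico]
    omega
  rw [this, Nat.card_Ico]

lemma sum_pi_fin_succ {X M : Type*} [Fintype X] [AddCommMonoid M] {m : ℕ}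
    (F : (Fin (m + 1) → X) → M) : ∑ v, F v = ∑ x, ∑ u, F (Fin.cons x u) := by
  rw [← Fintype.sum_prod_type']
  exact (Fintype.sum_equiv (Fin.consEquiv fun _ => X) _ _ fun _ => rfl).symm

lemma sum_range_sub_sub_mul (q r m : ℕ) :
    ∑ i ∈ range m, (q - ((i + 1) * q - r)) = min r (m * q) := by
  induction m with
  | zero => simp
  | succ m ih =>
    rw [sum_range_succ, ih, add_one_mul]
    omega

lemma sum_range_sum_range_add (F : ℕ → ℕ) (a b : ℕ) :
    ∑ x ∈ range a, ∑ y ∈ range b, F (x + y)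
      = ∑ s ∈ range (a + b), (min (s + 1) a - (s + 1 - b)) * F s := by
  have inner : ∀ x ∈ range a, ∑ y ∈ range b, F (x + y)
      = ∑ s ∈ range (a + b), if x ≤ s ∧ s < x + b then F s else 0 := by
    intro x hx
    rw [mem_range] at hx
    rw [← sum_filter, show {s ∈ range (a + b) | x ≤ s ∧ s < x + b} = Ico x (x + b) by
      ext s; simp only [mem_filter, mem_range, mem_Ico]; omega,
      sum_Ico_eq_sum_range, Nat.add_sub_cancel_left]
  rw [sum_congr rfl inner, sum_comm]
  refine sum_congr rfl fun s _ => ?_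
  rw [← sum_filter, sum_const, smul_eq_mul, show {x ∈ range a | x ≤ s ∧ s < x + b}
    = Ico (s + 1 - b) (min (s + 1) a) by ext x; simp only [mem_filter, mem_range, mem_Ico]; omega,
    Nat.card_Ico]

lemma sum_range_sum_range_add_le (F : ℕ → ℕ) {a b a' b' : ℕ} (hsum : a + b = a' + b')
    (hmin : min a b ≤ min a' b') :
    ∑ x ∈ range a, ∑ y ∈ range b, F (x + y) ≤ ∑ x ∈ range a', ∑ y ∈ range b', F (x + y) := by
  rw [sum_range_sum_range_add, sum_range_sum_range_add, ← hsum]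
  exact sum_le_sum fun s _ => Nat.mul_le_mul_right _ (by omega)

lemma totalDegree_le_of_degreeOf_le {σ R : Type*} [Fintype σ] [CommSemiring R]
    {f : MvPolynomial σ R} {d : ℕ} (h : ∀ i, f.degreeOf i ≤ d) :
    f.totalDegree ≤ Fintype.card σ * d := by
  refine Finset.sup_le fun μ hμ => ?_
  rw [Finsupp.sum_fintype _ _ fun _ => rfl]
  calc ∑ i, μ i ≤ ∑ _i : σ, d := sum_le_sum fun i _ => degreeOf_le_iff.1 (h i) μ hμ
    _ = Fintype.card σ * d := by simp

section Counting

variable {p : ℕ}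

lemma manhattanWeight_cons {m : ℕ} (x : ZMod p) (u : Fin m → ZMod p) :
    manhattanWeight (Fin.cons x u : Fin (m + 1) → ZMod p) = x.val + manhattanWeight u := by
  simp [manhattanWeight, Fin.sum_univ_succ]

variable [NeZero p]

lemma sum_zmod_val {M : Type*} [AddCommMonoid M] (H : ℕ → M) :
    ∑ x : ZMod p, H x.val = ∑ n ∈ range p, H n := by
  obtain ⟨n, rfl⟩ := Nat.exists_eq_succ_of_ne_zero (NeZero.ne p)
  exact Fin.sum_univ_eq_sum_range H (n + 1)

lemma card_filter_zmod_val (q : ℕ → Prop) [DecidablePred q] :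
    #{x : ZMod p | q x.val} = #{n ∈ range p | q n} := by
  simp only [card_filter]
  exact sum_zmod_val fun n => if q n then 1 else 0

lemma card_filter_lt_val (b : ℕ) : #{c : ZMod p | b < c.val} = p - 1 - b := by
  rw [card_filter_zmod_val (b < ·), show {n ∈ range p | b < n} = Ico (b + 1) p by
    ext n; simp only [mem_filter, mem_range, mem_Ico]; omega, Nat.card_Ico]
  omega

lemma manhattanWeight_le {m : ℕ} (v : Fin m → ZMod p) : manhattanWeight v ≤ m * (p - 1) := by
  calc manhattanWeight v ≤ ∑ _i : Fin m, (p - 1) :=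
        sum_le_sum fun i _ => Nat.le_sub_one_of_lt (ZMod.val_lt (v i))
    _ = m * (p - 1) := by simp

variable (p) in
def cardWeightGT (m : ℕ) (w : ℤ) : ℕ := #{v : Fin m → ZMod p | w < (manhattanWeight v : ℤ)}

lemma sum_X_pow_pow (m : ℕ) :
    (∑ i ∈ range p, (Polynomial.X : Polynomial ℤ) ^ i) ^ m
      = ∑ v : Fin m → ZMod p, Polynomial.X ^ manhattanWeight v := by
  rw [← sum_zmod_val (p := p) (Polynomial.X ^ ·), Fintype.sum_pow]
  simp only [manhattanWeight, prod_pow_eq_pow_sum]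

lemma pnomial_natCast (m n : ℕ) :
    pnomial p m n = #{v : Fin m → ZMod p | manhattanWeight v = n} := by
  simp only [pnomial, Nat.cast_nonneg, if_true, Int.toNat_natCast, sum_X_pow_pow,
    Polynomial.finsetSum_coeff, Polynomial.coeff_X_pow, card_filter]
  push_cast
  simp_rw [eq_comm]

lemma pnomialGT_eq_cardWeightGT (m : ℕ) (w : ℤ) : pnomialGT p m w = cardWeightGT p m w := by
  rw [cardWeightGT, card_eq_sum_card_fiberwise (f := manhattanWeight)
    (t := range (m * (p - 1) + 1)) fun v _ => mem_range_succ_iff.2 (manhattanWeight_le v)]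
  push_cast [pnomialGT, pnomial_natCast, filter_filter]
  refine sum_congr rfl fun i _ => ?_
  split_ifs with h
  · congr 3
    ext v
    constructor
    · rintro rfl; exact ⟨h, rfl⟩
    · exact And.right
  · rw [filter_false_of_mem fun v _ ⟨hw, hv⟩ => h (hv ▸ hw), card_empty, Nat.cast_zero]

lemma Δp_eq_sub (m r : ℕ) (w : ℤ) :
    Δp p m r w = cardWeightGT p (m - r / (p - 1)) w
      - ∑ j ∈ Icc (p - r % (p - 1)) (p - 1), (cardWeightGT p (m - r / (p - 1) - 1) (w - j) : ℤ) := by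
  unfold Δp
  split_ifs with h
  · simp [h, pnomialGT_eq_cardWeightGT, NeZero.pos p]
  · simp only [pnomialGT_eq_cardWeightGT]

variable (p) in
/-- For `r = α(p-1) + β`, the truncated subtraction makes the bound `0` below index `α`,
`p-1-β` at `α` and at least `p-1` beyond: this is the box `{0}^α × [0, p-1-β] × 𝔽_p^{m-α-1}`. -/
def staircase (m r : ℕ) : Finset (Fin m → ZMod p) :=
  {v | ∀ i : Fin m, (v i).val ≤ ((i : ℕ) + 1) * (p - 1) - r}

variable (p) in
def staircaseCount (m r : ℕ) (w : ℤ) : ℕ :=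
  #{v ∈ staircase p m r | w < (manhattanWeight v : ℤ)}

lemma cons_mem_staircase {m r : ℕ} (x : ZMod p) (u : Fin m → ZMod p) :
    (Fin.cons x u : Fin (m + 1) → ZMod p) ∈ staircase p (m + 1) r
      ↔ x.val ≤ p - 1 - r ∧ u ∈ staircase p m (r - (p - 1)) := by
  simp only [staircase, mem_filter, mem_univ, true_and, Fin.forall_fin_succ, Fin.cons_zero,
    Fin.cons_succ, Fin.val_zero, Fin.val_succ, zero_add, one_mul]
  refine and_congr Iff.rfl (forall_congr' fun i => ?_)
  have hu := ZMod.val_lt (u i)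
  have hi : p - 1 ≤ ((i : ℕ) + 1) * (p - 1) := Nat.le_mul_of_pos_left _ i.succ_pos
  rw [add_one_mul ((i : ℕ) + 1)]
  omega

lemma staircaseCount_succ (m r : ℕ) (w : ℤ) :
    staircaseCount p (m + 1) r w
      = ∑ n ∈ range (p - 1 - r + 1), staircaseCount p m (r - (p - 1)) (w - n) := by
  have hx : ∀ x : ZMod p, #{u | (Fin.cons x u : Fin (m + 1) → ZMod p) ∈ staircase p (m + 1) r ∧
      w < (manhattanWeight (Fin.cons x u : Fin (m + 1) → ZMod p) : ℤ)}
        = if x.val ≤ p - 1 - r then staircaseCount p m (r - (p - 1)) (w - x.val) else 0 := by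
    intro x
    simp only [cons_mem_staircase, manhattanWeight_cons, staircaseCount, Nat.cast_add]
    split_ifs with h
    · congr 1
      ext u
      simp only [mem_filter, mem_univ, true_and, h]
      exact and_congr_right fun _ => by omega
    · simp [h]
  calc staircaseCount p (m + 1) r w
      = ∑ x : ZMod p, #{u | (Fin.cons x u : Fin (m + 1) → ZMod p) ∈ staircase p (m + 1) r ∧
          w < (manhattanWeight (Fin.cons x u : Fin (m + 1) → ZMod p) : ℤ)} := by
        rw [staircaseCount, ← filter_univ_mem (staircase p (m + 1) r), filter_filter,
          card_filter, sum_pi_fin_succ]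
        simp only [card_filter, mem_filter, mem_univ, true_and]
    _ = ∑ n ∈ range p, if n ≤ p - 1 - r then staircaseCount p m (r - (p - 1)) (w - n) else 0 := by
        rw [sum_congr rfl fun x _ => hx x, sum_zmod_val fun n =>
          if n ≤ p - 1 - r then staircaseCount p m (r - (p - 1)) (w - n) else 0]
    _ = _ := by
        rw [← sum_filter]
        congr 1
        ext n
        simp only [mem_filter, mem_range]
        have := NeZero.ne p
        omega

lemma staircase_zero (m : ℕ) : staircase p m 0 = univ := by
  ext v
  simp only [staircase, mem_filter, mem_univ, true_and, Nat.sub_zero, iff_true]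
  exact fun i => (Nat.le_sub_one_of_lt (ZMod.val_lt _)).trans (Nat.le_mul_of_pos_left _ i.succ_pos)

lemma staircaseCount_zero (m : ℕ) (w : ℤ) : staircaseCount p m 0 w = cardWeightGT p m w := by
  rw [staircaseCount, staircase_zero, cardWeightGT]

lemma cardWeightGT_succ (m : ℕ) (w : ℤ) :
    cardWeightGT p (m + 1) w = ∑ n ∈ range p, cardWeightGT p m (w - n) := by
  simp only [← staircaseCount_zero, staircaseCount_succ, Nat.zero_sub, Nat.sub_zero,
    Nat.sub_add_cancel NeZero.one_le]

lemma staircaseCount_succ_of_le {m r : ℕ} (h : p - 1 ≤ r) (w : ℤ) :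
    staircaseCount p (m + 1) r w = staircaseCount p m (r - (p - 1)) w := by
  rw [staircaseCount_succ, Nat.sub_eq_zero_of_le h, zero_add, sum_range_one, Nat.cast_zero,
    sub_zero]

lemma staircaseCount_eq_sum (α k : ℕ) {β : ℕ} (hβ : β ≤ p - 1) (w : ℤ) :
    staircaseCount p (α + k + 1) (α * (p - 1) + β) w
      = ∑ n ∈ range (p - β), cardWeightGT p k (w - n) := by
  induction α with
  | zero =>
    rw [zero_mul, zero_add, zero_add, staircaseCount_succ, Nat.sub_eq_zero_of_le hβ,
      show p - 1 - β + 1 = p - β by have := NeZero.ne p; omega]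
    simp only [staircaseCount_zero]
  | succ α ih =>
    rw [show α + 1 + k + 1 = α + k + 1 + 1 by ring, staircaseCount_succ_of_le (by nlinarith),
      ← ih]
    congr 1
    rw [add_one_mul]
    omega

lemma staircaseCount_mul_sub_one (m : ℕ) (w : ℤ) :
    staircaseCount p m (m * (p - 1)) w = cardWeightGT p 0 w := by
  induction m with
  | zero => rw [zero_mul, staircaseCount_zero]
  | succ m ih =>
    rw [staircaseCount_succ_of_le (Nat.le_mul_of_pos_left _ m.succ_pos), Nat.succ_mul,
      Nat.add_sub_cancel, ih]

lemma staircaseCount_succ_le_of_lt {m r t : ℕ} (h : r - t < m * (p - 1)) (ht : t ≤ p - 1)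
    (htr : t ≤ r) (w : ℤ) :
    staircaseCount p (m + 1) r w ≤ ∑ x ∈ range (p - t), staircaseCount p m (r - t) (w - x) := by
  obtain ⟨α, β, hβ, hrt⟩ : ∃ α β, β < p - 1 ∧ r - t = α * (p - 1) + β :=
    ⟨_, _, Nat.mod_lt _ (Nat.pos_of_mul_pos_left (h.trans_le' (Nat.zero_le _))),
      (Nat.div_add_mod' _ _).symm⟩
  obtain ⟨k, rfl⟩ := Nat.exists_eq_add_of_lt
    (Nat.lt_of_mul_lt_mul_right (show α * (p - 1) < m * (p - 1) by omega))
  set F : ℕ → ℕ := fun s => cardWeightGT p k (w - s)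
  have hRHS : ∑ x ∈ range (p - t), staircaseCount p (α + k + 1) (r - t) (w - x)
      = ∑ x ∈ range (p - t), ∑ y ∈ range (p - β), F (x + y) := by
    simp only [hrt, staircaseCount_eq_sum α k hβ.le, F, Nat.cast_add, sub_sub]
  rw [hRHS]
  rcases le_or_gt (β + t) (p - 1) with hβt | hβt
  · calc staircaseCount p (α + k + 1 + 1) r w
        = ∑ y ∈ range (p - (β + t)), cardWeightGT p (k + 1) (w - y) := by
          rw [show α + k + 1 + 1 = α + (k + 1) + 1 by ring,
            show r = α * (p - 1) + (β + t) by omega, staircaseCount_eq_sum α (k + 1) hβt]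
      _ = ∑ y ∈ range (p - (β + t)), ∑ z ∈ range p, F (y + z) := by
          simp only [cardWeightGT_succ, F, Nat.cast_add, sub_sub]
      _ ≤ _ := sum_range_sum_range_add_le F (by omega) (by omega)
  · calc staircaseCount p (α + k + 1 + 1) r w
        = ∑ y ∈ range (p - (β + t - (p - 1))), F y := by
          rw [show α + k + 1 + 1 = (α + 1) + k + 1 by ring,
            show r = (α + 1) * (p - 1) + (β + t - (p - 1)) by rw [add_one_mul]; omega,
            staircaseCount_eq_sum (α + 1) k (by omega)]
      _ = ∑ x ∈ range 1, ∑ y ∈ range (p - (β + t - (p - 1))), F (x + y) := by simp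
      _ ≤ _ := sum_range_sum_range_add_le F (by omega) (by omega)

theorem staircaseCount_succ_le {m r t : ℕ} (hr : r ≤ (m + 1) * (p - 1)) (ht : t ≤ p - 1)
    (htr : t ≤ r) (w : ℤ) :
    staircaseCount p (m + 1) r w
      ≤ ∑ x ∈ range (p - t), staircaseCount p m (min (r - t) (m * (p - 1))) (w - x) := by
  rcases le_or_gt (m * (p - 1)) (r - t) with h | h
  · rw [min_eq_right h]
    simp only [staircaseCount_mul_sub_one]
    rw [add_one_mul] at hr
    rw [show r = m * (p - 1) + (r - m * (p - 1)) by omega,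
      staircaseCount_eq_sum m 0 (by omega)]
    exact sum_le_sum_of_subset (range_mono (by omega))
  · rw [min_eq_left h.le]
    exact staircaseCount_succ_le_of_lt h ht htr w

noncomputable def puncturedWeight {m : ℕ} (w : ℤ) (f : MvPolynomial (Fin m) (ZMod p)) : ℕ :=
  #{v | w < (manhattanWeight v : ℤ) ∧ eval v f ≠ 0}

lemma puncturedWeight_eq_sum_fibre {m : ℕ} (f : MvPolynomial (Fin (m + 1)) (ZMod p)) (w : ℤ) :
    puncturedWeight w f = ∑ u : Fin m → ZMod p, #{x : ZMod p | w - manhattanWeight u < x.val ∧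
      ((finSuccEquiv (ZMod p) m f).map (eval u)).eval x ≠ 0} := by
  rw [puncturedWeight, card_filter, sum_pi_fin_succ, sum_comm]
  refine sum_congr rfl fun u _ => ?_
  rw [card_filter]
  refine sum_congr rfl fun x _ => ?_
  simp only [manhattanWeight_cons, eval_eq_eval_mv_eval', Nat.cast_add]
  congr 1
  exact propext (and_congr_left fun _ => by omega)

end Counting

section Prime

variable {p : ℕ} [Fact p.Prime]

theorem Δp_eq_staircaseCount {m r : ℕ} (hr : r ≤ m * (p - 1)) (w : ℤ) :
    Δp p m r w = staircaseCount p m r w := by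
  have hp := (Fact.out : p.Prime).two_le
  rw [Δp_eq_sub]
  set α := r / (p - 1)
  set β := r % (p - 1)
  have hαβ : α * (p - 1) + β = r := Nat.div_add_mod' r (p - 1)
  have hβ : β < p - 1 := Nat.mod_lt _ (by omega)
  have hαm : α ≤ m := Nat.div_le_of_le_mul (by rwa [mul_comm])
  rcases hαm.lt_or_eq with hαm | rfl
  · obtain ⟨k, rfl⟩ := Nat.exists_eq_add_of_lt hαm
    rw [← hαβ, staircaseCount_eq_sum α k hβ.le, show α + k + 1 - α - 1 = k by omega,
      show α + k + 1 - α = k + 1 by omega, cardWeightGT_succ,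
      ← sum_range_add_sum_Ico _ (show p - β ≤ p by omega),
      show Icc (p - β) (p - 1) = Ico (p - β) p by ext; simp only [mem_Icc, mem_Ico]; omega]
    push_cast
    ring
  · have hβ0 : β = 0 := by nlinarith
    have hr' : r = α * (p - 1) := by omega
    rw [hβ0, Nat.sub_self, Nat.sub_zero, Icc_eq_empty (by omega), sum_empty, sub_zero, hr',
      staircaseCount_mul_sub_one]

lemma card_range_filter_le_card_eval_ne_zero {φ : Polynomial (ZMod p)} (hφ : φ ≠ 0) {t : ℕ}
    (hdeg : φ.natDegree ≤ t) (s : ℤ) :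
    #((range (p - t)).filter fun n : ℕ => s < n) ≤ #{x : ZMod p | s < x.val ∧ φ.eval x ≠ 0} := by
  have hroots : #{x : ZMod p | φ.eval x = 0} ≤ t :=
    (Polynomial.card_le_degree_of_subset_roots fun x hx =>
      (Polynomial.mem_roots hφ).2 (mem_filter.1 hx).2).trans hdeg
  have hsplit : #{x : ZMod p | s < x.val}
      ≤ #{x : ZMod p | s < x.val ∧ φ.eval x ≠ 0} + #{x : ZMod p | φ.eval x = 0} := by
    refine (card_le_card fun x hx => ?_).trans (card_union_le _ _)
    simp only [mem_union, mem_filter, mem_univ, true_and] at hx ⊢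
    tauto
  rw [card_filter_zmod_val (fun n => s < n), card_range_filter_lt] at hsplit
  rw [card_range_filter_lt]
  omega

lemma sum_puncturedWeight_leadingCoeff_le {m : ℕ} (f : MvPolynomial (Fin (m + 1)) (ZMod p))
    (w : ℤ) :
    ∑ n ∈ range (p - (finSuccEquiv (ZMod p) m f).natDegree),
        puncturedWeight (w - n) (finSuccEquiv (ZMod p) m f).leadingCoeff
      ≤ puncturedWeight w f := by
  set F := finSuccEquiv (ZMod p) m f
  rw [puncturedWeight_eq_sum_fibre]
  simp only [puncturedWeight, card_filter]
  rw [sum_comm]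
  refine sum_le_sum fun u _ => ?_
  by_cases hu : eval u F.leadingCoeff = 0
  · simp [hu]
  have hφ : F.map (eval u) ≠ 0 := fun h => hu (by
    rw [Polynomial.leadingCoeff, ← Polynomial.coeff_map, h, Polynomial.coeff_zero])
  calc ∑ n ∈ range (p - F.natDegree),
        (if w - n < (manhattanWeight u : ℤ) ∧ eval u F.leadingCoeff ≠ 0 then 1 else 0)
      = #((range (p - F.natDegree)).filter fun n : ℕ => w - manhattanWeight u < n) := by
        rw [card_filter]
        refine sum_congr rfl fun n _ => ?_
        simp only [hu, ne_eq, not_false_eq_true, and_true]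
        congr 1
        exact propext (by omega)
    _ ≤ _ := by
        rw [← card_filter]
        exact card_range_filter_le_card_eval_ne_zero hφ Polynomial.natDegree_map_le _

theorem staircaseCount_le_puncturedWeight {m r : ℕ} (hr : r ≤ m * (p - 1))
    {f : MvPolynomial (Fin m) (ZMod p)} (hf : f ≠ 0) (hred : ∀ i, f.degreeOf i ≤ p - 1)
    (hdeg : f.totalDegree ≤ r) (w : ℤ) : staircaseCount p m r w ≤ puncturedWeight w f := by
  induction m generalizing r w with
  | zero =>
    have hne : ∀ v, eval v f ≠ 0 := fun v h => hf (by
      rw [eq_C_of_isEmpty f, eval_C] at h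
      rw [eq_C_of_isEmpty f, h, map_zero])
    exact card_le_card fun v hv => by
      simp only [mem_filter, mem_univ, true_and] at hv ⊢
      exact ⟨hv.2, hne v⟩
  | succ m ih =>
    set F := finSuccEquiv (ZMod p) m f
    have hg : F.leadingCoeff ≠ 0 :=
      Polynomial.leadingCoeff_ne_zero.2 (AddEquivClass.map_ne_zero_iff.2 hf)
    have ht : F.natDegree ≤ p - 1 := (natDegree_finSuccEquiv f).trans_le (hred 0)
    have hgdeg : F.leadingCoeff.totalDegree + F.natDegree ≤ r :=
      (totalDegree_coeff_finSuccEquiv_add_le f _ hg).trans hdeg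
    have hgred : ∀ j, F.leadingCoeff.degreeOf j ≤ p - 1 :=
      fun j => (degreeOf_coeff_finSuccEquiv f j _).trans (hred j.succ)
    have hgdeg' : F.leadingCoeff.totalDegree ≤ m * (p - 1) := by
      simpa using totalDegree_le_of_degreeOf_le hgred
    calc staircaseCount p (m + 1) r w
        ≤ ∑ n ∈ range (p - F.natDegree),
            staircaseCount p m (min (r - F.natDegree) (m * (p - 1))) (w - n) :=
          staircaseCount_succ_le hr ht (by omega) w
      _ ≤ ∑ n ∈ range (p - F.natDegree), puncturedWeight (w - n) F.leadingCoeff :=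
          sum_le_sum fun n _ => ih (min_le_right _ _) hg hgred (le_min (by omega) hgdeg') _
      _ ≤ puncturedWeight w f := sum_puncturedWeight_leadingCoeff_le f w

variable (p) in
noncomputable def staircasePoly (m r : ℕ) : MvPolynomial (Fin m) (ZMod p) :=
  ∏ i : Fin m, ∏ c ∈ {c : ZMod p | ((i : ℕ) + 1) * (p - 1) - r < c.val}, (X i - C c)

lemma eval_staircasePoly_ne_zero_iff {m r : ℕ} (v : Fin m → ZMod p) :
    eval v (staircasePoly p m r) ≠ 0 ↔ v ∈ staircase p m r := by
  simp only [staircasePoly, staircase, map_prod, map_sub, eval_X, eval_C, prod_ne_zero_iff,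
    mem_filter, mem_univ, true_and, ne_eq, sub_eq_zero, forall_const]
  exact forall_congr' fun i => ⟨fun h => not_lt.1 fun hv => h _ hv rfl,
    fun h c hc hvc => (hvc ▸ h).not_gt hc⟩

lemma staircasePoly_ne_zero (m r : ℕ) : staircasePoly p m r ≠ 0 := by
  intro h
  have h0 : (0 : Fin m → ZMod p) ∈ staircase p m r := by simp [staircase]
  rw [← eval_staircasePoly_ne_zero_iff, h, map_zero] at h0
  exact h0 rfl

lemma degreeOf_staircasePoly_le (m r : ℕ) (j : Fin m) :
    (staircasePoly p m r).degreeOf j ≤ p - 1 := by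
  let E (i : Fin m) : Finset (ZMod p) := {c | ((i : ℕ) + 1) * (p - 1) - r < c.val}
  calc (staircasePoly p m r).degreeOf j
      ≤ ∑ i, ∑ c ∈ E i, degreeOf j (X i - C c : MvPolynomial (Fin m) (ZMod p)) :=
        (degreeOf_prod_le _ _ _).trans (sum_le_sum fun i _ => degreeOf_prod_le _ _ _)
    _ ≤ ∑ i, ∑ c ∈ E i, if j = i then 1 else 0 := by
        gcongr with i _ c _
        refine (degreeOf_sub_le _ _ _).trans ?_
        rw [degreeOf_X, degreeOf_C, max_eq_left (Nat.zero_le _)]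
    _ = #(E j) := by simp
    _ ≤ p - 1 := by simp only [E, card_filter_lt_val]; omega

lemma totalDegree_staircasePoly_le (m r : ℕ) : (staircasePoly p m r).totalDegree ≤ r := by
  let E (i : Fin m) : Finset (ZMod p) := {c | ((i : ℕ) + 1) * (p - 1) - r < c.val}
  calc (staircasePoly p m r).totalDegree
      ≤ ∑ i, ∑ c ∈ E i, (X i - C c : MvPolynomial (Fin m) (ZMod p)).totalDegree :=
        (totalDegree_finsetProd _ _).trans (sum_le_sum fun i _ => totalDegree_finsetProd _ _)
    _ ≤ ∑ i, ∑ _c ∈ E i, 1 := by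
        gcongr with i _ c _
        refine (totalDegree_sub _ _).trans ?_
        rw [totalDegree_X, totalDegree_C, max_eq_left (Nat.zero_le _)]
    _ = min r (m * (p - 1)) := by
        simp only [sum_const, smul_eq_mul, mul_one, E, card_filter_lt_val]
        exact (Fin.sum_univ_eq_sum_range (fun i => p - 1 - ((i + 1) * (p - 1) - r)) m).trans
          (sum_range_sub_sub_mul _ _ _)
    _ ≤ r := min_le_left _ _

lemma puncturedWeight_staircasePoly (m r : ℕ) (w : ℤ) :
    puncturedWeight w (staircasePoly p m r) = staircaseCount p m r w := by
  rw [puncturedWeight, staircaseCount, ← filter_univ_mem (staircase p m r), filter_filter]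
  simp only [eval_staircasePoly_ne_zero_iff, and_comm]

end Prime

end PuncturedReedMuller

open PuncturedReedMuller in
theorem punctured_reedMuller_distance_general (p m r : ℕ) [Fact p.Prime]
    (hr : r ≤ m * (p - 1)) (w : ℤ) :
    IsLeast {n : ℤ | ∃ f : MvPolynomial (Fin m) (ZMod p), f ≠ 0 ∧
        (∀ i, f.degreeOf i ≤ p - 1) ∧ f.totalDegree ≤ r ∧
        n = ((Finset.univ.filter fun v : Fin m → ZMod p =>
          w < (manhattanWeight v : ℤ) ∧ MvPolynomial.eval v f ≠ 0).card : ℤ)}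
      (Δp p m r w) := by
  rw [Δp_eq_staircaseCount hr]
  refine ⟨⟨staircasePoly p m r, staircasePoly_ne_zero m r, degreeOf_staircasePoly_le m r,
    totalDegree_staircasePoly_le m r, ?_⟩, ?_⟩
  · exact_mod_cast (puncturedWeight_staircasePoly m r w).symm
  · rintro n ⟨f, hf, hred, hdeg, rfl⟩
    exact_mod_cast staircaseCount_le_puncturedWeight hr hf hred hdeg w

/-- If `Δ_p(m,r,w) > 0`, then the minimum of
`#{v ∈ 𝔽_p^m : |v|_M > w ∧ f(v) ≠ 0}` over all nonzero reduced polynomials `f`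
of total degree at most `r` equals `Δ_p(m,r,w)`: the distance of the punctured
Reed–Muller code `PRM_p(r,m,w)` is `Δ_p(m,r,w)`. -/
theorem punctured_reedMuller_distance (p m r : ℕ) [Fact p.Prime]
    (hm : 1 ≤ m) (hr : r ≤ m * (p - 1)) (w : ℤ)
    (hΔ : 0 < Δp p m r w) :
    IsLeast {n : ℤ | ∃ f : MvPolynomial (Fin m) (ZMod p), f ≠ 0 ∧
        (∀ i, f.degreeOf i ≤ p - 1) ∧ f.totalDegree ≤ r ∧
        n = ((Finset.univ.filter fun v : Fin m → ZMod p =>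
          w < (manhattanWeight v : ℤ) ∧ MvPolynomial.eval v f ≠ 0).card : ℤ)}
      (Δp p m r w) :=
  punctured_reedMuller_distance_general p m r hr w
end

section
/- Let p be a prime, m ≥ 1 an integer, 0 ≤ r ≤ m(p−1), and w an integer, and suppose Δ_p(m, r, w) > 0. Then any two reduced polynomials f, g ∈ 𝔽_p[x_1,…,x_m] of total degree at most r that agree at every point v ∈ 𝔽_p^m with Manhattan weight |v|_M > w are equal; equivalently, every nonzero reduced polynomial of total degree at most r takes a nonzero value at some point of Manhattan weight greater than w. (This is the statement that the generator matrix of the triorthogonal space punctured at all points of Manhattan weight at most w remains of full rank.) -/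
open Finset Polynomial

lemma pnomial_neg (p k : ℕ) {s : ℤ} (hs : s < 0) : pnomial p k s = 0 := by
  rw [pnomial, if_neg (not_le.2 hs)]

lemma pnomial_natDegree_le (p k : ℕ) (hp : 0 < p) :
    ((∑ i ∈ Finset.range p, (Polynomial.X : Polynomial ℤ) ^ i) ^ k).natDegree ≤ k * (p - 1) := by
  refine (Polynomial.natDegree_pow_le).trans ?_
  gcongr
  refine Polynomial.natDegree_sum_le_of_forall_le _ _ fun i hi => ?_
  rw [Polynomial.natDegree_X_pow]
  have := Finset.mem_range.1 hi
  omega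

lemma pnomial_gt (p k : ℕ) (hp : 0 < p) {s : ℤ} (hs : (k * (p - 1) : ℕ) < s) :
    pnomial p k s = 0 := by
  have hs0 : 0 ≤ s := le_trans (by positivity) hs.le
  rw [pnomial, if_pos hs0]
  apply Polynomial.coeff_eq_zero_of_natDegree_lt
  refine lt_of_le_of_lt (pnomial_natDegree_le p k hp) ?_
  omega
lemma pnomial_succ (p k : ℕ) (hp : 0 < p) (s : ℤ) :
    pnomial p (k + 1) s = ∑ j ∈ Finset.range p, pnomial p k (s - j) := by
  rcases lt_or_ge s 0 with hs | hs
  · rw [pnomial_neg p _ hs]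
    refine (Finset.sum_eq_zero fun j hj => pnomial_neg p k ?_).symm
    have : (0:ℤ) ≤ (j:ℤ) := Int.natCast_nonneg j
    omega
  · obtain ⟨N, rfl⟩ : ∃ N : ℕ, s = (N : ℤ) := ⟨s.toNat, (Int.toNat_of_nonneg hs).symm⟩
    have hF : ∀ j : ℕ, (∑ i ∈ Finset.range p, (Polynomial.X : Polynomial ℤ) ^ i).coeff j
        = if j < p then 1 else 0 := by
      intro j
      simp [Polynomial.finset_sum_coeff, Polynomial.coeff_X_pow, Finset.sum_ite_eq,
        Finset.mem_range]
    have key : ∀ j ∈ Finset.range p, pnomial p k ((N:ℤ) - j) =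
        if j ≤ N then ((∑ i ∈ Finset.range p, (Polynomial.X : Polynomial ℤ) ^ i) ^ k).coeff (N - j)
        else 0 := by
      intro j _
      by_cases h : j ≤ N
      · rw [if_pos h, pnomial, if_pos (by omega), show ((N:ℤ) - j).toNat = N - j by omega]
      · rw [if_neg h, pnomial_neg p k (by omega)]
    rw [Finset.sum_congr rfl key, pnomial, if_pos hs, Int.toNat_natCast, pow_succ,
      Polynomial.coeff_mul, Finset.Nat.sum_antidiagonal_eq_sum_range_succ_mk]
    simp_rw [hF, mul_ite, mul_one, mul_zero]
    rw [← Finset.sum_filter, ← Finset.sum_filter]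
    refine Finset.sum_nbij' (fun b => N - b) (fun j => N - j) ?_ ?_ ?_ ?_ ?_
    · intro a ha
      simp only [Finset.mem_filter, Finset.mem_range] at ha ⊢
      omega
    · intro a ha
      simp only [Finset.mem_filter, Finset.mem_range] at ha ⊢
      omega
    · intro a ha
      simp only [Finset.mem_filter, Finset.mem_range] at ha
      omega
    · intro a ha
      simp only [Finset.mem_filter, Finset.mem_range] at ha
      omega
    · intro a ha
      simp only [Finset.mem_filter, Finset.mem_range] at ha
      congr 1
      omega

lemma pnomialGT_eq_big (p k : ℕ) (hp : 0 < p) {M : ℕ} (hM : k * (p-1) + 1 ≤ M) (s : ℤ) :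
    pnomialGT p k s = ∑ i ∈ Finset.range M, if s < (i:ℤ) then pnomial p k i else 0 := by
  rw [pnomialGT]
  refine Finset.sum_subset (Finset.range_subset_range.2 hM) fun i hi hni => ?_
  simp only [Finset.mem_range] at hi hni
  have h1 : (k * (p-1) : ℕ) < (i : ℤ) := by exact_mod_cast (by omega : k * (p-1) < i)
  rw [pnomial_gt p k hp h1]
  split <;> rfl

lemma pnomialGT_zero_of_ge (p k : ℕ) {s : ℤ} (hs : (k*(p-1) : ℕ) ≤ s) :
    pnomialGT p k s = 0 := by
  refine Finset.sum_eq_zero fun i hi => ?_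
  simp only [Finset.mem_range] at hi
  rw [if_neg]
  have : (i : ℤ) ≤ (k*(p-1) : ℕ) := by exact_mod_cast (by omega : i ≤ k*(p-1))
  omega

lemma pnomialGT_succ (p k : ℕ) (hp : 0 < p) (w : ℤ) :
    pnomialGT p (k+1) w = ∑ j ∈ Finset.range p, pnomialGT p k (w - j) := by
  rw [pnomialGT]
  have step1 : ∀ i ∈ Finset.range ((k+1) * (p - 1) + 1),
      (if w < (i:ℤ) then pnomial p (k+1) i else 0)
        = ∑ j ∈ Finset.range p, (if w < (i:ℤ) then pnomial p k ((i:ℤ) - j) else 0) := by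
    intro i _
    split
    · exact pnomial_succ p k hp i
    · simp
  rw [Finset.sum_congr rfl step1, Finset.sum_comm]
  refine Finset.sum_congr rfl fun j hj => ?_
  simp only [Finset.mem_range] at hj
  set M := (k+1) * (p - 1) + 1 with hMdef
  have hexp : (k+1) * (p - 1) = k * (p-1) + (p-1) := by ring
  have hjM : j ≤ M := by omega
  rw [Finset.range_eq_Ico, ← Finset.sum_Ico_consecutive _ (Nat.zero_le j) hjM]
  have hzero : ∑ i ∈ Finset.Ico 0 j, (if w < (i:ℤ) then pnomial p k ((i:ℤ) - (j:ℤ)) else 0) = 0 := by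
    refine Finset.sum_eq_zero fun i hi => ?_
    simp only [Finset.mem_Ico] at hi
    have : (i:ℤ) - (j:ℤ) < 0 := by
      have : (i:ℤ) < (j:ℤ) := by exact_mod_cast hi.2
      omega
    rw [pnomial_neg p k this]
    split <;> rfl
  rw [hzero, zero_add, Finset.sum_Ico_eq_sum_range,
    pnomialGT_eq_big p k hp (M := M - j) (by omega) (w - j)]
  refine Finset.sum_congr rfl fun i _ => ?_
  have h1 : ((j + i : ℕ) : ℤ) - (j:ℤ) = (i:ℤ) := by push_cast; ring
  rw [h1]
  refine if_congr ?_ rfl rfl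
  constructor <;> intro h <;> [skip; skip] <;> push_cast at h ⊢ <;> omega
lemma delta_pos_w_lt (p m r : ℕ) (hp : 2 ≤ p) (hr : r ≤ m * (p - 1)) (w : ℤ)
    (hΔ : 0 < Δp p m r w) : w < ((m * (p - 1) : ℕ) : ℤ) - (r : ℤ) := by
  have hP : 0 < p - 1 := by omega
  by_contra hcon
  push_neg at hcon
  by_cases h0 : r % (p - 1) = 0
  · rw [Δp, if_pos h0] at hΔ
    set P := p - 1 with hPdef
    set α := r / P with hαdef
    set n := m - α with hndef
    have hr' : α * P = r := Nat.div_mul_cancel (Nat.dvd_of_mod_eq_zero h0)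
    have hαm : α * P ≤ m * P := by rw [hr']; exact hr
    have hαm' : α ≤ m := Nat.le_of_mul_le_mul_right hαm hP
    have hsub : n * P + α * P = m * P := by
      rw [← add_mul, hndef, Nat.sub_add_cancel hαm']
    have hz : pnomialGT p n w = 0 := by
      refine pnomialGT_zero_of_ge p n ?_
      rw [← hPdef]
      omega
    rw [hz] at hΔ
    exact lt_irrefl _ hΔ
  · rw [Δp, if_neg h0] at hΔ
    set P := p - 1 with hPdef
    set α := r / P with hαdef
    set β := r % P with hβdef
    set n := m - α with hndef
    have hmod : P * α + β = r := Nat.div_add_mod r P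
    have hr1 : α * P + β = r := by rwa [mul_comm P α] at hmod
    have hβP : β < P := Nat.mod_lt r hP
    have hrlt : r < m * P := by
      rcases eq_or_lt_of_le hr with he | h
      · exact absurd (by rw [hβdef, he]; exact Nat.mul_mod_left m P) h0
      · exact h
    have hαm : α < m := (Nat.div_lt_iff_lt_mul hP).2 hrlt
    have hn1 : 1 ≤ n := by omega
    have hsub : n * P + α * P = m * P := by
      rw [← add_mul, hndef, Nat.sub_add_cancel hαm.le]
    have hsub1 : (n - 1) * P + P = n * P := by
      rw [← Nat.succ_mul, Nat.succ_eq_add_one, Nat.sub_add_cancel hn1]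
    have hrec : pnomialGT p n w = ∑ j ∈ Finset.range p, pnomialGT p (n - 1) (w - j) := by
      conv_lhs => rw [show n = (n - 1) + 1 by omega]
      exact pnomialGT_succ p (n - 1) (by omega) w
    have hsplit : ∑ j ∈ Finset.range p, pnomialGT p (n - 1) (w - j)
        = ∑ j ∈ Finset.Icc (p - β) P, pnomialGT p (n - 1) (w - j) := by
      rw [Finset.range_eq_Ico,
        ← Finset.sum_Ico_consecutive _ (Nat.zero_le (p - β)) (by omega : p - β ≤ p)]
      have h1 : ∑ j ∈ Finset.Ico 0 (p - β), pnomialGT p (n - 1) (w - (j : ℤ)) = 0 := by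
        refine Finset.sum_eq_zero fun j hj => ?_
        simp only [Finset.mem_Ico] at hj
        refine pnomialGT_zero_of_ge p (n - 1) ?_
        rw [← hPdef]
        omega
      rw [h1, zero_add]
      congr 1
      rw [← Finset.Ico_add_one_right_eq_Icc]
      congr 1
      omega
    rw [hrec, hsplit, sub_self] at hΔ
    exact lt_irrefl _ hΔ
open MvPolynomial in
lemma exists_high_weight_nonzero (p : ℕ) [hpf : Fact p.Prime] :
    ∀ (m : ℕ) (f : MvPolynomial (Fin m) (ZMod p)), f ≠ 0 →
      (∀ i, f.degreeOf i ≤ p - 1) →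
      ∃ v : Fin m → ZMod p,
        m * (p - 1) ≤ manhattanWeight v + f.totalDegree ∧ MvPolynomial.eval v f ≠ 0 := by
  intro m
  induction m with
  | zero =>
      intro f hf _
      obtain ⟨c, rfl⟩ := MvPolynomial.C_surjective (Fin 0) f
      exact ⟨Fin.elim0, by simp [manhattanWeight], by simpa using hf⟩
  | succ n ih =>
      intro f hf hdeg
      have hp2 : 2 ≤ p := hpf.out.two_le
      set q := MvPolynomial.finSuccEquiv (ZMod p) n f with hq
      have hq0 : q ≠ 0 := by
        rw [hq]
        intro hc
        exact hf ((map_eq_zero_iff _ (AlgEquiv.injective _)).1 hc)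
      set j0 := q.natDegree with hj0
      have hlead : q.coeff j0 ≠ 0 := Polynomial.leadingCoeff_ne_zero.mpr hq0
      set g := q.coeff j0 with hg
      have hgdeg : ∀ i : Fin n, g.degreeOf i ≤ p - 1 := fun i =>
        (MvPolynomial.degreeOf_coeff_finSuccEquiv f i j0).trans (hdeg i.succ)
      have hj0p : j0 ≤ p - 1 := by
        rw [hj0, hq, MvPolynomial.natDegree_finSuccEquiv]
        exact hdeg 0
      have htd : g.totalDegree + j0 ≤ f.totalDegree :=
        MvPolynomial.totalDegree_coeff_finSuccEquiv_add_le f j0 hlead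
      obtain ⟨v', hw', hev'⟩ := ih g hlead hgdeg
      set h := q.map (MvPolynomial.eval v') with hh
      have hcoeff : h.coeff j0 ≠ 0 := by
        rw [hh, Polynomial.coeff_map]
        exact hev'
      have hh0 : h ≠ 0 := fun hz => hcoeff (by rw [hz, Polynomial.coeff_zero])
      have hhdeg : h.natDegree ≤ j0 := Polynomial.natDegree_map_le
      have hroots : Multiset.card h.roots ≤ j0 := (Polynomial.card_roots' h).trans hhdeg
      set S : Finset (ZMod p) :=
        (Finset.range (j0 + 1)).image (fun k => ((p - 1 - j0 + k : ℕ) : ZMod p)) with hS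
      have hlt : ∀ k ∈ Finset.range (j0 + 1), p - 1 - j0 + k < p := by
        intro k hk
        simp only [Finset.mem_range] at hk
        omega
      have hScard : S.card = j0 + 1 := by
        rw [hS, Finset.card_image_of_injOn, Finset.card_range]
        intro a ha b hb hab
        have h1 : ((p - 1 - j0 + a : ℕ) : ZMod p).val = p - 1 - j0 + a :=
          ZMod.val_cast_of_lt (hlt a ha)
        have h2 : ((p - 1 - j0 + b : ℕ) : ZMod p).val = p - 1 - j0 + b :=
          ZMod.val_cast_of_lt (hlt b hb)
        have := congrArg ZMod.val hab
        rw [h1, h2] at this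
        omega
      have hex : ∃ t ∈ S, ¬ h.IsRoot t := by
        by_contra hc
        push_neg at hc
        have hsub : S ⊆ h.roots.toFinset := by
          intro t ht
          rw [Multiset.mem_toFinset, Polynomial.mem_roots hh0]
          exact hc t ht
        have := Finset.card_le_card hsub
        have h2 := (Multiset.toFinset_card_le h.roots)
        omega
      obtain ⟨t, htS, htroot⟩ := hex
      obtain ⟨k, hk, rfl⟩ := Finset.mem_image.1 htS
      refine ⟨Fin.cons ((p - 1 - j0 + k : ℕ) : ZMod p) v', ?_, ?_⟩
      · have hweq : manhattanWeight (Fin.cons ((p - 1 - j0 + k : ℕ) : ZMod p) v' :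
            Fin (n+1) → ZMod p) = (p - 1 - j0 + k) + manhattanWeight v' := by
          rw [manhattanWeight, Fin.sum_univ_succ]
          simp only [Fin.cons_zero, Fin.cons_succ]
          rw [ZMod.val_cast_of_lt (hlt k hk)]
          rfl
        rw [hweq]
        have hexp : (n + 1) * (p - 1) = n * (p - 1) + (p - 1) := by ring
        simp only [Finset.mem_range] at hk
        omega
      · rw [MvPolynomial.eval_eq_eval_mv_eval']
        exact htroot
/-- If `Δ_p(m,r,w) > 0`, then any two reduced polynomials of
total degree at most `r` agreeing at every point of Manhattan weight `> w` are
equal; equivalently, every nonzero reduced polynomial of total degree at most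
`r` takes a nonzero value at some point of Manhattan weight `> w`.  (The
punctured generator matrix remains of full rank.) -/
theorem punctured_generator_full_rank (p m r : ℕ) [Fact p.Prime]
    (hm : 1 ≤ m) (hr : r ≤ m * (p - 1)) (w : ℤ)
    (hΔ : 0 < Δp p m r w) :
    (∀ f g : MvPolynomial (Fin m) (ZMod p),
      (∀ i, f.degreeOf i ≤ p - 1) → f.totalDegree ≤ r →
      (∀ i, g.degreeOf i ≤ p - 1) → g.totalDegree ≤ r →
      (∀ v : Fin m → ZMod p, w < (manhattanWeight v : ℤ) →
        MvPolynomial.eval v f = MvPolynomial.eval v g) →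
      f = g) ∧
    (∀ f : MvPolynomial (Fin m) (ZMod p), f ≠ 0 →
      (∀ i, f.degreeOf i ≤ p - 1) → f.totalDegree ≤ r →
      ∃ v : Fin m → ZMod p,
        w < (manhattanWeight v : ℤ) ∧ MvPolynomial.eval v f ≠ 0) := by
  have hp2 : 2 ≤ p := (Fact.out : p.Prime).two_le
  have hw : w < ((m * (p - 1) : ℕ) : ℤ) - (r : ℤ) := delta_pos_w_lt p m r hp2 hr w hΔ
  have key : ∀ f : MvPolynomial (Fin m) (ZMod p), f ≠ 0 →
      (∀ i, f.degreeOf i ≤ p - 1) → f.totalDegree ≤ r →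
      ∃ v : Fin m → ZMod p,
        w < (manhattanWeight v : ℤ) ∧ MvPolynomial.eval v f ≠ 0 := by
    intro f hf hdeg htd
    obtain ⟨v, hv1, hv2⟩ := exists_high_weight_nonzero p m f hf hdeg
    refine ⟨v, ?_, hv2⟩
    have htd' : (f.totalDegree : ℤ) ≤ (r : ℤ) := by exact_mod_cast htd
    have hv1' : ((m * (p - 1) : ℕ) : ℤ) ≤ (manhattanWeight v : ℤ) + (f.totalDegree : ℤ) := by
      exact_mod_cast hv1
    linarith
  refine ⟨?_, key⟩
  intro f g hdf htf hdg htg hag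
  by_contra hne
  have hsub : f - g ≠ 0 := sub_ne_zero.2 hne
  obtain ⟨v, hv1, hv2⟩ := key (f - g)
    hsub
    (fun i => (MvPolynomial.degreeOf_sub_le i f g).trans (max_le (hdf i) (hdg i)))
    ((MvPolynomial.totalDegree_sub f g).trans (max_le htf htg))
  exact hv2 (by rw [map_sub, hag v hv1, sub_self])
end
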